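/- Let m, n ≥ 4 be distinct even integers and let G_{m,n} be the subgroup of SL(2,ℝ) generated by A = [[1, 2cos(π/m) + 2cos(π/n)], [0, 1]] and B = [[2cos(π/m), 1], [−1, 0]]. Suppose α is a nonzero real number that is a parabolic fixed point of G_{m,n}, and let T = [[1, 0], [0, α]] ∈ GL(2,ℝ) (whose Möbius action is z ↦ z/α). Then each of 0, 1, and ∞ is a parabolic fixed point of the conjugate group T·G_{m,n}·T^{−1}, and T·G_{m,n}·T^{−1} contains a hyperbolic element whose Möbius fixed points are 1/α and −1/α, both of which lie in the subfield ℚ(cos(π/m), cos(π/n)) of ℝ. -/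

import Mathlib

open Real Matrix

/-- A matrix in SL(2,ℝ) is parabolic if it is not ±I and has trace of absolute value 2. -/
def IsParabolicMat (M : Matrix (Fin 2) (Fin 2) ℝ) : Prop :=
  M ≠ 1 ∧ M ≠ -1 ∧ |Matrix.trace M| = 2

/-- The Möbius action of `M` fixes the real number `z`. -/
def MoebiusFixes (M : Matrix (Fin 2) (Fin 2) ℝ) (z : ℝ) : Prop :=
  M 0 0 * z + M 0 1 = (M 1 0 * z + M 1 1) * z

/-- The Möbius action of `M` fixes the point ∞. -/
def MoebiusFixesInf (M : Matrix (Fin 2) (Fin 2) ℝ) : Prop :=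
  M 1 0 = 0

/-- The conjugate `T·G·T⁻¹` of the group generated by `A` and `B` by the matrix
`T = !![1, 0; 0, α]`, as a set of 2×2 real matrices. -/
def conjSet (A B : Matrix.SpecialLinearGroup (Fin 2) ℝ) (α : ℝ) :
    Set (Matrix (Fin 2) (Fin 2) ℝ) :=
  {N | ∃ M ∈ Subgroup.closure ({A, B} : Set (Matrix.SpecialLinearGroup (Fin 2) ℝ)),
    N = !![(1 : ℝ), 0; 0, α] * (M : Matrix (Fin 2) (Fin 2) ℝ) * !![(1 : ℝ), 0; 0, α⁻¹]}

/-!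
Conjugation by `T = diag(1, α)` preserves traces and parabolicity and moves fixed points by
`z ↦ z / α`, so it suffices to find elements of `G = G_{m,n}` itself: `B⁻¹AB` is parabolic and
fixes `0`, the given parabolic element fixes `α`, and `A` fixes `∞`.

For the hyperbolic element write `m = 2t`, `n = 2u`. Both `B` and `AB` have the shape
`!![2 cos θ, 1; -1, 0]` (with `θ = π/m`, resp. `θ = π - π/n`), and when `cos (kθ) = 0` its
`k`-th power is a multiple of `!![cos θ, 1; -1, -cos θ]`. Hence `Bᵗ (AB)ᵘ = !![a, c; c, a]` with
`c ≠ 0`, and `a² - c² = 1` forces `|a| > 1`: it is hyperbolic with fixed points `±1`.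

A parabolic `!![p, q; r, s]` of determinant `1` fixing `z` has `r ≠ 0` and
`(2rz - (p - s))² = (p + s)² - 4 = 0`, so `z = (p - s) / 2r` lies in every subfield containing
its entries; the entries of `G` lie in `ℚ(cos (π/m), cos (π/n))`.
-/

theorem Matrix.trace_conj_of_mul_eq_one {ι R : Type*} [Fintype ι] [DecidableEq ι] [CommRing R]
    {D D' M : Matrix ι ι R} (h : D' * D = 1) : trace (D * M * D') = trace M := by
  rw [trace_mul_cycle, h, Matrix.one_mul]

lemma IsParabolicMat.conj {D D' M : Matrix (Fin 2) (Fin 2) ℝ} (h : D' * D = 1)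
    (hM : IsParabolicMat M) : IsParabolicMat (D * M * D') := by
  obtain ⟨hne_one, hne_neg_one, htr⟩ := hM
  have recover : M = D' * (D * M * D') * D := by
    simp only [← Matrix.mul_assoc, h, Matrix.one_mul]
    rw [Matrix.mul_assoc, h, Matrix.mul_one]
  refine ⟨fun h1 => hne_one ?_, fun h1 => hne_neg_one ?_, by rwa [trace_conj_of_mul_eq_one h]⟩
  · rw [recover, h1, Matrix.mul_one, h]
  · rw [recover, h1, Matrix.mul_neg, Matrix.mul_one, Matrix.neg_mul, h]

lemma isParabolicMat_of_trace_eq_two {M : Matrix (Fin 2) (Fin 2) ℝ} (htr : trace M = 2)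
    (hM : M ≠ 1) : IsParabolicMat M := by
  refine ⟨hM, fun h => ?_, by rw [htr, abs_two]⟩
  rw [h, trace_neg, trace_one] at htr
  norm_num at htr

lemma isParabolicMat_upper {b : ℝ} (hb : b ≠ 0) : IsParabolicMat !![1, b; 0, 1] :=
  isParabolicMat_of_trace_eq_two (by norm_num [trace_fin_two_of])
    (fun h => hb (by simpa using congrFun (congrFun h 0) 1))

lemma isParabolicMat_lower {b : ℝ} (hb : b ≠ 0) : IsParabolicMat !![1, 0; b, 1] :=
  isParabolicMat_of_trace_eq_two (by norm_num [trace_fin_two_of])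
    (fun h => hb (by simpa using congrFun (congrFun h 1) 0))

lemma hyperbolic_of_symmetric {a c : ℝ}
    (hdet : (!![a, c; c, a] : Matrix (Fin 2) (Fin 2) ℝ).det = 1) (hc : c ≠ 0) :
    2 < |trace !![a, c; c, a]| ∧ MoebiusFixes !![a, c; c, a] 1 ∧
      MoebiusFixes !![a, c; c, a] (-1) := by
  rw [det_fin_two_of] at hdet
  refine ⟨?_, by simp [MoebiusFixes, add_comm], by simp [MoebiusFixes]⟩
  have ha : 1 < a ^ 2 := by nlinarith [sq_pos_of_ne_zero hc]
  rw [trace_fin_two_of, ← two_mul, abs_mul, abs_two]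
  nlinarith [sq_abs a, abs_nonneg a]

section DiagonalConjugation

variable {α : ℝ}

lemma diag_inv_mul_diag (hα : α ≠ 0) :
    !![(1 : ℝ), 0; 0, α⁻¹] * !![(1 : ℝ), 0; 0, α] = 1 := by
  rw [mul_fin_two, one_fin_two]
  simp [hα]

lemma conj_diag_eq (hα : α ≠ 0) (M : Matrix (Fin 2) (Fin 2) ℝ) :
    !![(1 : ℝ), 0; 0, α] * M * !![(1 : ℝ), 0; 0, α⁻¹] =
      !![M 0 0, M 0 1 / α; α * M 1 0, M 1 1] := by
  rw [eta_fin_two M, mul_fin_two, mul_fin_two]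
  simp [div_eq_mul_inv, mul_comm α, hα]

lemma MoebiusFixes.conj_diag (hα : α ≠ 0) {M : Matrix (Fin 2) (Fin 2) ℝ} {z : ℝ}
    (h : MoebiusFixes M z) :
    MoebiusFixes (!![(1 : ℝ), 0; 0, α] * M * !![(1 : ℝ), 0; 0, α⁻¹]) (z / α) := by
  unfold MoebiusFixes at h ⊢
  rw [conj_diag_eq hα]
  simp only [of_apply, cons_val', cons_val_zero, cons_val_one, empty_val', cons_val_fin_one]
  field_simp
  linear_combination h

lemma MoebiusFixesInf.conj_diag {M : Matrix (Fin 2) (Fin 2) ℝ} (h : MoebiusFixesInf M) :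
    MoebiusFixesInf (!![(1 : ℝ), 0; 0, α] * M * !![(1 : ℝ), 0; 0, α⁻¹]) := by
  unfold MoebiusFixesInf at h ⊢
  rw [eta_fin_two M, mul_fin_two, mul_fin_two]
  simp [h]

end DiagonalConjugation

section ParabolicFixedPoint

variable {M : Matrix (Fin 2) (Fin 2) ℝ} {z : ℝ}

lemma IsParabolicMat.two_mul_mul_eq (hdet : M.det = 1) (hM : IsParabolicMat M)
    (hz : MoebiusFixes M z) : 2 * M 1 0 * z = M 0 0 - M 1 1 := by
  rw [det_fin_two] at hdet
  have htr : (M 0 0 + M 1 1) ^ 2 = 4 := by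
    rw [← trace_fin_two, ← sq_abs, hM.2.2]; norm_num
  unfold MoebiusFixes at hz
  have hsq : (2 * M 1 0 * z - (M 0 0 - M 1 1)) ^ 2 = 0 := by
    linear_combination (-4 * M 1 0) * hz + htr - 4 * hdet
  linarith [pow_eq_zero_iff (n := 2) two_ne_zero |>.mp hsq]

lemma IsParabolicMat.apply_one_zero_ne_zero (hdet : M.det = 1) (hM : IsParabolicMat M)
    (hz : MoebiusFixes M z) : M 1 0 ≠ 0 := by
  intro hr
  have hdiag : M 0 0 = M 1 1 := by
    have := hM.two_mul_mul_eq hdet hz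
    rw [hr] at this
    linarith
  unfold MoebiusFixes at hz
  rw [det_fin_two, hr, ← hdiag] at hdet
  rw [hr, ← hdiag] at hz
  have hq : M 0 1 = 0 := by linarith
  rcases mul_self_eq_one_iff.mp (by linarith : M 0 0 * M 0 0 = 1) with hp | hp
  · exact hM.1 (by rw [eta_fin_two M, hq, hr, ← hdiag, hp, one_fin_two])
  · refine hM.2.1 ?_
    rw [eta_fin_two M, hq, hr, ← hdiag, hp]
    ext i j
    fin_cases i <;> fin_cases j <;> simp

lemma IsParabolicMat.mem_subfield_of_moebiusFixes (F : Subfield ℝ) (hF : ∀ i j, M i j ∈ F)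
    (hdet : M.det = 1) (hM : IsParabolicMat M) (hz : MoebiusFixes M z) : z ∈ F := by
  have hr := hM.apply_one_zero_ne_zero hdet hz
  have hz' : z = (M 0 0 - M 1 1) / (2 * M 1 0) := by
    rw [← hM.two_mul_mul_eq hdet hz]; field_simp
  rw [hz']
  exact div_mem (sub_mem (hF 0 0) (hF 1 1)) (mul_mem (ofNat_mem F 2) (hF 1 0))

end ParabolicFixedPoint

def slTwoOver {R : Type*} [CommRing R] (S : Subring R) :
    Subgroup (Matrix.SpecialLinearGroup (Fin 2) R) where
  carrier := {M | ∀ i j, (M : Matrix (Fin 2) (Fin 2) R) i j ∈ S}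
  mul_mem' {M N} hM hN i j := by
    rw [Matrix.SpecialLinearGroup.coe_mul, mul_apply, Fin.sum_univ_two]
    exact add_mem (mul_mem (hM i 0) (hN 0 j)) (mul_mem (hM i 1) (hN 1 j))
  one_mem' i j := by
    rw [Matrix.SpecialLinearGroup.coe_one, one_apply]
    split_ifs
    exacts [one_mem S, zero_mem S]
  inv_mem' {M} hM i j := by
    rw [Matrix.SpecialLinearGroup.coe_inv, adjugate_fin_two]
    fin_cases i <;> fin_cases j
    exacts [hM 1 1, neg_mem (hM 0 1), neg_mem (hM 1 0), hM 0 0]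

section EllipticPowers

noncomputable def ellipticMat (x : ℝ) : Matrix (Fin 2) (Fin 2) ℝ := !![2 * cos x, 1; -1, 0]

lemma sin_smul_ellipticMat_pow (x : ℝ) (k : ℕ) :
    sin x • ellipticMat x ^ k =
      !![sin ((k + 1) * x), sin (k * x); -sin (k * x), -sin ((k - 1) * x)] := by
  induction k with
  | zero => ext i j; fin_cases i <;> fin_cases j <;> simp
  | succ k ih =>
    have next : sin ((k + 1 + 1) * x) = 2 * cos x * sin ((k + 1) * x) - sin (k * x) := by
      have := sin_add_sin ((k + 1 + 1) * x) (k * x)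
      ring_nf at this ⊢; linarith
    have cur : sin ((k + 1) * x) = 2 * cos x * sin (k * x) - sin ((k - 1) * x) := by
      have := sin_add_sin ((k + 1) * x) ((k - 1) * x)
      ring_nf at this ⊢; linarith
    rw [pow_succ, ← smul_mul_assoc, ih, ellipticMat, mul_fin_two]
    push_cast
    ext i j
    fin_cases i <;> fin_cases j <;> simp [next, cur] <;> ring

lemma sin_smul_ellipticMat_pow_of_cos_eq_zero {x : ℝ} {k : ℕ} (hk : cos (k * x) = 0) :
    sin x • ellipticMat x ^ k = sin (k * x) • !![cos x, 1; -1, -cos x] := by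
  have hadd : sin ((k + 1) * x) = sin (k * x) * cos x := by
    rw [add_mul, one_mul, sin_add, hk, zero_mul, add_zero]
  have hsub : sin ((k - 1) * x) = sin (k * x) * cos x := by
    rw [sub_mul, one_mul, sin_sub, hk, zero_mul, sub_zero]
  rw [sin_smul_ellipticMat_pow, hadd, hsub]
  ext i j
  fin_cases i <;> fin_cases j <;> simp [mul_comm]

lemma exists_ellipticMat_pow_mul_pow_eq {x y : ℝ} {t u : ℕ} (hx : sin x ≠ 0) (hy : sin y ≠ 0)
    (ht : cos (t * x) = 0) (hu : cos (u * y) = 0) (hxy : cos x ≠ cos y) :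
    ∃ a c : ℝ, c ≠ 0 ∧ ellipticMat x ^ t * ellipticMat y ^ u = !![a, c; c, a] := by
  have hst : sin (t * x) ≠ 0 := fun h => by simpa [h, ht] using sin_sq_add_cos_sq (t * x)
  have hsu : sin (u * y) ≠ 0 := fun h => by simpa [h, hu] using sin_sq_add_cos_sq (u * y)
  set s := sin (t * x) * sin (u * y) / (sin x * sin y)
  refine ⟨s * (cos x * cos y - 1), s * (cos x - cos y),
    mul_ne_zero (by positivity) (sub_ne_zero.mpr hxy), ?_⟩
  have key := congrArg₂ (· * ·) (sin_smul_ellipticMat_pow_of_cos_eq_zero ht)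
    (sin_smul_ellipticMat_pow_of_cos_eq_zero hu)
  simp only [smul_mul_smul_comm, mul_fin_two] at key
  rw [← inv_smul_smul₀ (mul_ne_zero hx hy) (ellipticMat x ^ t * ellipticMat y ^ u), key]
  ext i j
  fin_cases i <;> fin_cases j <;> simp [s] <;> ring

end EllipticPowers

lemma sin_pi_div_pos {m : ℕ} (hm : 1 < m) : 0 < sin (π / m) :=
  sin_pos_of_pos_of_lt_pi (by positivity) (div_lt_self pi_pos (by exact_mod_cast hm))

lemma cos_pi_div_pos {m : ℕ} (hm : 2 < m) : 0 < cos (π / m) := by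
  refine cos_pos_of_mem_Ioo ⟨by linarith [pi_pos, show 0 < π / m by positivity], ?_⟩
  rw [div_lt_div_iff_of_pos_left pi_pos (by positivity) two_pos]
  exact_mod_cast hm

lemma cos_nat_mul_pi_div_two_mul {t : ℕ} (ht : t ≠ 0) : cos (t * (π / ↑(t + t))) = 0 := by
  rw [← cos_pi_div_two]
  congr 1
  push_cast
  field_simp
  ring

lemma cos_nat_mul_pi_sub_pi_div_two_mul {u : ℕ} (hu : u ≠ 0) :
    cos (u * (π - π / ↑(u + u))) = 0 := by
  rw [← sin_nat_mul_pi u, ← cos_sub_pi_div_two]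
  congr 1
  push_cast
  field_simp
  ring

section Generators

variable {A B : Matrix.SpecialLinearGroup (Fin 2) ℝ}

lemma closure_le_slTwoOver {c₁ c₂ : ℝ}
    (hA : (A : Matrix (Fin 2) (Fin 2) ℝ) = !![1, 2 * c₁ + 2 * c₂; 0, 1])
    (hB : (B : Matrix (Fin 2) (Fin 2) ℝ) = !![2 * c₁, 1; -1, 0]) :
    Subgroup.closure {A, B} ≤ slTwoOver (Subfield.closure ({c₁, c₂} : Set ℝ)).toSubring := by
  set F := Subfield.closure ({c₁, c₂} : Set ℝ)
  have h₁ : c₁ ∈ F := Subfield.subset_closure (by simp)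
  have h₂ : c₂ ∈ F := Subfield.subset_closure (by simp)
  rw [Subgroup.closure_le, Set.insert_subset_iff, Set.singleton_subset_iff]
  constructor <;> intro i j <;> simp only [Subfield.mem_toSubring, hA, hB] <;>
    fin_cases i <;> fin_cases j <;> simp <;> aesop

lemma coe_inv_mul_mul_eq {c₁ c₂ : ℝ}
    (hA : (A : Matrix (Fin 2) (Fin 2) ℝ) = !![1, 2 * c₁ + 2 * c₂; 0, 1])
    (hB : (B : Matrix (Fin 2) (Fin 2) ℝ) = !![2 * c₁, 1; -1, 0]) :
    ((B⁻¹ * A * B : Matrix.SpecialLinearGroup (Fin 2) ℝ) : Matrix (Fin 2) (Fin 2) ℝ) =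
      !![1, 0; -(2 * c₁ + 2 * c₂), 1] := by
  rw [Matrix.SpecialLinearGroup.coe_mul, Matrix.SpecialLinearGroup.coe_mul,
    Matrix.SpecialLinearGroup.coe_inv, hA, hB, adjugate_fin_two_of, mul_fin_two, mul_fin_two]
  ext i j
  fin_cases i <;> fin_cases j <;> simp

lemma coe_mul_eq_ellipticMat {x y : ℝ}
    (hA : (A : Matrix (Fin 2) (Fin 2) ℝ) = !![1, 2 * cos x + 2 * cos y; 0, 1])
    (hB : (B : Matrix (Fin 2) (Fin 2) ℝ) = ellipticMat x) :
    ((A * B : Matrix.SpecialLinearGroup (Fin 2) ℝ) : Matrix (Fin 2) (Fin 2) ℝ) =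
      ellipticMat (π - y) := by
  rw [Matrix.SpecialLinearGroup.coe_mul, hA, hB, ellipticMat, ellipticMat, mul_fin_two,
    cos_pi_sub]
  ext i j
  fin_cases i <;> fin_cases j <;> simp

lemma exists_coe_pow_mul_pow_eq {x y : ℝ} {t u : ℕ}
    (hA : (A : Matrix (Fin 2) (Fin 2) ℝ) = !![1, 2 * cos x + 2 * cos y; 0, 1])
    (hB : (B : Matrix (Fin 2) (Fin 2) ℝ) = ellipticMat x) (hx : sin x ≠ 0) (hy : sin y ≠ 0)
    (ht : cos (t * x) = 0) (hu : cos (u * (π - y)) = 0) (hxy : cos x + cos y ≠ 0) :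
    ∃ a c : ℝ, c ≠ 0 ∧
      ((B ^ t * (A * B) ^ u : Matrix.SpecialLinearGroup (Fin 2) ℝ) :
        Matrix (Fin 2) (Fin 2) ℝ) = !![a, c; c, a] := by
  rw [Matrix.SpecialLinearGroup.coe_mul, Matrix.SpecialLinearGroup.coe_pow,
    Matrix.SpecialLinearGroup.coe_pow, hB, coe_mul_eq_ellipticMat hA hB]
  refine exists_ellipticMat_pow_mul_pow_eq hx (by rwa [sin_pi_sub]) ht hu ?_
  rw [cos_pi_sub]
  contrapose! hxy
  linarith

end Generators

theorem stmt7_general (m n : ℕ) (hm : 4 ≤ m) (hn : 4 ≤ n)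
    (hme : Even m) (hne : Even n)
    (A B : Matrix.SpecialLinearGroup (Fin 2) ℝ)
    (hA : (A : Matrix (Fin 2) (Fin 2) ℝ) =
      !![1, 2 * Real.cos (Real.pi / (m : ℝ)) + 2 * Real.cos (Real.pi / (n : ℝ)); 0, 1])
    (hB : (B : Matrix (Fin 2) (Fin 2) ℝ) =
      !![2 * Real.cos (Real.pi / (m : ℝ)), 1; -1, 0])
    (α : ℝ) (hα : α ≠ 0)
    (hpf : ∃ P ∈ Subgroup.closure ({A, B} : Set (Matrix.SpecialLinearGroup (Fin 2) ℝ)),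
      IsParabolicMat (P : Matrix (Fin 2) (Fin 2) ℝ) ∧
        MoebiusFixes (P : Matrix (Fin 2) (Fin 2) ℝ) α) :
    (∃ N ∈ conjSet A B α, IsParabolicMat N ∧ MoebiusFixes N 0) ∧
    (∃ N ∈ conjSet A B α, IsParabolicMat N ∧ MoebiusFixes N 1) ∧
    (∃ N ∈ conjSet A B α, IsParabolicMat N ∧ MoebiusFixesInf N) ∧
    (∃ N ∈ conjSet A B α, 2 < |Matrix.trace N| ∧
      MoebiusFixes N α⁻¹ ∧ MoebiusFixes N (-α⁻¹)) ∧
    α⁻¹ ∈ Subfield.closure ({Real.cos (Real.pi / (m : ℝ)),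
      Real.cos (Real.pi / (n : ℝ))} : Set ℝ) ∧
    -α⁻¹ ∈ Subfield.closure ({Real.cos (Real.pi / (m : ℝ)),
      Real.cos (Real.pi / (n : ℝ))} : Set ℝ) := by
  have hAG : A ∈ Subgroup.closure {A, B} := Subgroup.subset_closure (by simp)
  have hBG : B ∈ Subgroup.closure {A, B} := Subgroup.subset_closure (by simp)
  have hcm : 0 < cos (π / m) := cos_pi_div_pos (by omega)
  have hcn : 0 < cos (π / n) := cos_pi_div_pos (by omega)
  have hT := diag_inv_mul_diag hα
  obtain ⟨P, hPG, hP, hPα⟩ := hpf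
  have hαF := hP.mem_subfield_of_moebiusFixes _ (closure_le_slTwoOver hA hB hPG) P.2 hPα
  obtain ⟨t, rfl⟩ := hme
  obtain ⟨u, rfl⟩ := hne
  obtain ⟨a, c, hc, hN⟩ := exists_coe_pow_mul_pow_eq hA hB (sin_pi_div_pos (by omega)).ne'
    (sin_pi_div_pos (by omega)).ne' (cos_nat_mul_pi_div_two_mul (by omega))
    (cos_nat_mul_pi_sub_pi_div_two_mul (by omega)) (by positivity)
  obtain ⟨hN_hyp, hN_one, hN_neg_one⟩ := hyperbolic_of_symmetric (hN ▸ (B ^ t * (A * B) ^ u).2) hc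
  have hBAB_fix_zero : MoebiusFixes (B⁻¹ * A * B : Matrix.SpecialLinearGroup (Fin 2) ℝ) 0 := by
    simp [MoebiusFixes, coe_inv_mul_mul_eq hA hB]
  refine ⟨⟨_, ⟨B⁻¹ * A * B, mul_mem (mul_mem (inv_mem hBG) hAG) hBG, rfl⟩, ?_,
      by simpa using hBAB_fix_zero.conj_diag hα⟩,
    ⟨_, ⟨P, hPG, rfl⟩, hP.conj hT, by simpa [hα] using hPα.conj_diag hα⟩,
    ⟨_, ⟨A, hAG, rfl⟩, ?_, MoebiusFixesInf.conj_diag (by simp [MoebiusFixesInf, hA])⟩,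
    ⟨_, ⟨_, mul_mem (pow_mem hBG t) (pow_mem (mul_mem hAG hBG) u), rfl⟩, ?_⟩,
    inv_mem hαF, neg_mem (inv_mem hαF)⟩
  · rw [coe_inv_mul_mul_eq hA hB]
    exact (isParabolicMat_lower (neg_ne_zero.mpr (by positivity))).conj hT
  · rw [hA]
    exact (isParabolicMat_upper (by positivity)).conj hT
  · rw [hN, trace_conj_of_mul_eq_one hT]
    exact ⟨hN_hyp, by simpa using hN_one.conj_diag hα,
      by simpa [neg_div] using hN_neg_one.conj_diag hα⟩

theorem stmt7 (m n : ℕ) (hm : 4 ≤ m) (hn : 4 ≤ n) (hmn : m ≠ n)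
    (hme : Even m) (hne : Even n)
    (A B : Matrix.SpecialLinearGroup (Fin 2) ℝ)
    (hA : (A : Matrix (Fin 2) (Fin 2) ℝ) =
      !![1, 2 * Real.cos (Real.pi / (m : ℝ)) + 2 * Real.cos (Real.pi / (n : ℝ)); 0, 1])
    (hB : (B : Matrix (Fin 2) (Fin 2) ℝ) =
      !![2 * Real.cos (Real.pi / (m : ℝ)), 1; -1, 0])
    (α : ℝ) (hα : α ≠ 0)
    (hpf : ∃ P ∈ Subgroup.closure ({A, B} : Set (Matrix.SpecialLinearGroup (Fin 2) ℝ)),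
      IsParabolicMat (P : Matrix (Fin 2) (Fin 2) ℝ) ∧
        MoebiusFixes (P : Matrix (Fin 2) (Fin 2) ℝ) α) :
    (∃ N ∈ conjSet A B α, IsParabolicMat N ∧ MoebiusFixes N 0) ∧
    (∃ N ∈ conjSet A B α, IsParabolicMat N ∧ MoebiusFixes N 1) ∧
    (∃ N ∈ conjSet A B α, IsParabolicMat N ∧ MoebiusFixesInf N) ∧
    (∃ N ∈ conjSet A B α, 2 < |Matrix.trace N| ∧
      MoebiusFixes N α⁻¹ ∧ MoebiusFixes N (-α⁻¹)) ∧
    α⁻¹ ∈ Subfield.closure ({Real.cos (Real.pi / (m : ℝ)),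
      Real.cos (Real.pi / (n : ℝ))} : Set ℝ) ∧
    -α⁻¹ ∈ Subfield.closure ({Real.cos (Real.pi / (m : ℝ)),
      Real.cos (Real.pi / (n : ℝ))} : Set ℝ) :=
  stmt7_general m n hm hn hme hne A B hA hB α hα hpf
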